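/- Suppose λ_Q < 0 and the convex relaxation min { f(y) : ‖y‖ ≤ 1, Ay − b ∈ 𝒦 } has an optimal solution y* with ‖y*‖ = 1. Then this relaxation is tight: its optimal value equals min { h(y) : ‖y‖ ≤ 1, Ay − b ∈ 𝒦 }. Conversely, if the relaxation is tight then some optimal solution of the relaxation has unit norm. -/

import Mathlib

/-!
Since `‖y‖ ≤ 1` on the feasible set, `f = h + λ_Q (1 - ‖y‖²)` lies below `h` there, with equality
exactly on the unit sphere. A minimizer of `f` on which `f = h` therefore also minimizes `h`, and
conversely, if the two optimal values agree, a minimizer of `h` (which exists by compactness) also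
minimizes `f` and has `f = h` there, i.e. unit norm.
-/

open Matrix

theorem IsMinOn.csInf_image_eq {α β : Type*} [ConditionallyCompleteLattice β] {f : α → β}
    {S : Set α} {x : α} (hx : x ∈ S) (hmin : IsMinOn f S x) : sInf (f '' S) = f x :=
  IsLeast.csInf_eq ⟨Set.mem_image_of_mem f hx, by rintro _ ⟨y, hy, rfl⟩; exact hmin hy⟩

theorem exists_isMinOn_eq_iff_sInf_image_eq {α β : Type*} [ConditionallyCompleteLattice β]
    {f h : α → β} {S : Set α}
    (hfh : ∀ y ∈ S, f y ≤ h y) (hmin : ∃ z ∈ S, IsMinOn h S z) (hbdd : BddBelow (f '' S)) :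
    (∃ y ∈ S, IsMinOn f S y ∧ f y = h y) ↔ sInf (h '' S) = sInf (f '' S) := by
  constructor
  · rintro ⟨y, hyS, hy, hfy⟩
    have hhy : IsMinOn h S y := fun x hx => hfy ▸ (hy hx).trans (hfh x hx)
    rw [hy.csInf_image_eq hyS, hhy.csInf_image_eq hyS, hfy]
  · intro hinf
    obtain ⟨z, hzS, hz⟩ := hmin
    have hzinf : sInf (f '' S) = h z := by rw [← hinf, hz.csInf_image_eq hzS]
    have hzf : f z = h z :=
      le_antisymm (hfh z hzS) (hzinf ▸ csInf_le hbdd (Set.mem_image_of_mem f hzS))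
    refine ⟨z, hzS, fun y hy => ?_, hzf⟩
    rw [hzf, ← hzinf]
    exact csInf_le hbdd (Set.mem_image_of_mem f hy)

theorem EuclideanSpace.dotProduct_sub_smul_one_mulVec {ι : Type*} [Fintype ι] [DecidableEq ι]
    (Q : Matrix ι ι ℝ) (c : ℝ) (y : EuclideanSpace ℝ ι) :
    y ⬝ᵥ (Q - c • 1) *ᵥ y = y ⬝ᵥ Q *ᵥ y - c * ‖y‖ ^ 2 := by
  rw [← real_inner_self_eq_norm_sq, EuclideanSpace.inner_eq_star_dotProduct, star_trivial,
    sub_mulVec, dotProduct_sub, smul_mulVec, one_mulVec, dotProduct_smul, smul_eq_mul]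

theorem conic_TRS_tight_iff_unit_norm_optimal_general {n m : ℕ} (Q : Matrix (Fin n) (Fin n) ℝ)
    (g : EuclideanSpace ℝ (Fin n)) (lamQ : ℝ)
    (A : Matrix (Fin m) (Fin n) ℝ) (b : Fin m → ℝ) (K : Set (Fin m → ℝ))
    (hneg : lamQ < 0)
    (hKclosed : IsClosed K)
    (h f : EuclideanSpace ℝ (Fin n) → ℝ)
    (hh : ∀ y, h y = y ⬝ᵥ Q.mulVec y + 2 * (g ⬝ᵥ y))
    (hf : ∀ y, f y = y ⬝ᵥ (Q - lamQ • (1 : Matrix (Fin n) (Fin n) ℝ)).mulVec y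
        + 2 * (g ⬝ᵥ y) + lamQ)
    (S : Set (EuclideanSpace ℝ (Fin n)))
    (hS : S = {y : EuclideanSpace ℝ (Fin n) | ‖y‖ ≤ 1 ∧ A.mulVec y - b ∈ K})
    (hSne : S.Nonempty) :
    (∃ ystar ∈ S, (∀ y ∈ S, f ystar ≤ f y) ∧ ‖ystar‖ = 1) ↔
      sInf (h '' S) = sInf (f '' S) := by
  have hfh : ∀ y, f y = h y + lamQ * (1 - ‖y‖ ^ 2) := fun y => by
    rw [hf, hh, EuclideanSpace.dotProduct_sub_smul_one_mulVec]; ring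
  have hSc : IsCompact S := by
    have hSeq : S = Metric.closedBall 0 1 ∩
        (fun y : EuclideanSpace ℝ (Fin n) => A *ᵥ y - b) ⁻¹' K := by
      ext y; simp [hS]
    exact hSeq ▸ (isCompact_closedBall 0 1).inter_right (hKclosed.preimage (by fun_prop))
  have hhc : Continuous h := by simp only [funext hh]; fun_prop
  have hfc : Continuous f := by simp only [funext hfh]; fun_prop
  have hle : ∀ y ∈ S, f y ≤ h y := fun y hy => by
    have hy1 : ‖y‖ ^ 2 ≤ 1 := pow_le_one₀ (norm_nonneg y) (hS ▸ hy).1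
    rw [hfh]
    exact add_le_of_nonpos_right (mul_nonpos_of_nonpos_of_nonneg hneg.le (sub_nonneg.2 hy1))
  have hexact : ∀ y, f y = h y ↔ ‖y‖ = 1 := fun y => by
    rw [hfh, add_eq_left, mul_eq_zero, or_iff_right hneg.ne, sub_eq_zero, eq_comm,
      pow_eq_one_iff_of_nonneg (norm_nonneg y) two_ne_zero]
  simp_rw [← isMinOn_iff, ← hexact]
  exact exists_isMinOn_eq_iff_sInf_image_eq hle (hSc.exists_isMinOn hSne hhc.continuousOn)
    (hSc.image hfc).bddBelow

theorem conic_TRS_tight_iff_unit_norm_optimal {n m : ℕ} (Q : Matrix (Fin n) (Fin n) ℝ)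
    (g : EuclideanSpace ℝ (Fin n)) (lamQ : ℝ)
    (A : Matrix (Fin m) (Fin n) ℝ) (b : Fin m → ℝ) (K : Set (Fin m → ℝ))
    (hQ : Q.IsSymm)
    (hlb : ∀ y : EuclideanSpace ℝ (Fin n), lamQ * ‖y‖ ^ 2 ≤ y ⬝ᵥ Q.mulVec y)
    (hev : ∃ v : EuclideanSpace ℝ (Fin n), v ≠ 0 ∧ Q.mulVec v = lamQ • (v : Fin n → ℝ))
    (hneg : lamQ < 0)
    (hKclosed : IsClosed K) (hKconv : Convex ℝ K)
    (hKcone : ∀ x ∈ K, ∀ c : ℝ, 0 ≤ c → c • x ∈ K)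
    (h f : EuclideanSpace ℝ (Fin n) → ℝ)
    (hh : ∀ y, h y = y ⬝ᵥ Q.mulVec y + 2 * (g ⬝ᵥ y))
    (hf : ∀ y, f y = y ⬝ᵥ (Q - lamQ • (1 : Matrix (Fin n) (Fin n) ℝ)).mulVec y
        + 2 * (g ⬝ᵥ y) + lamQ)
    (S : Set (EuclideanSpace ℝ (Fin n)))
    (hS : S = {y : EuclideanSpace ℝ (Fin n) | ‖y‖ ≤ 1 ∧ A.mulVec y - b ∈ K})
    (hSne : S.Nonempty) :
    (∃ ystar ∈ S, (∀ y ∈ S, f ystar ≤ f y) ∧ ‖ystar‖ = 1) ↔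
      sInf (h '' S) = sInf (f '' S) :=
  conic_TRS_tight_iff_unit_norm_optimal_general Q g lamQ A b K hneg hKclosed h f hh hf S hS hSne
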